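/- arXiv:1307.0443 — 3 statements merged into one kernel-verified Lean document; each statement's English description precedes it below -/
import Mathlib

section
/- Let p be an odd prime and Π a two-dimensional left ideal of the quaternion algebra H̄ = (−1,−1) over F_p. Then the kernel of the reduced trace restricted to Π is exactly one-dimensional; i.e., up to scaling there is a unique nonzero trace-zero element t = xi + yj + zk in Π. -/
/-! The real part cannot vanish identically on a nonzero left ideal, because the real parts of
`-i x`, `-j x`, `-k x` are the imaginary coordinates of `x`. So the reduced trace is a nonzero
linear form on the plane `Π`, and its kernel in `Π` is a line. -/

open Module

namespace Submodule

variable {K E : Type*} [DivisionRing K] [AddCommGroup E] [Module K E]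

theorem finrank_inf_ker_add_one (V : Submodule K E) [FiniteDimensional K V] (f : Dual K E)
    (hf : ∃ x ∈ V, f x ≠ 0) : finrank K ↥(V ⊓ LinearMap.ker f) + 1 = finrank K V := by
  obtain ⟨x, hxV, hfx⟩ := hf
  have hres : f.domRestrict V ≠ 0 := fun h ↦ hfx (LinearMap.congr_fun h ⟨x, hxV⟩)
  rw [← map_comap_subtype, finrank_map_subtype_eq, ← LinearMap.ker_domRestrict]
  exact Dual.finrank_ker_add_one_of_ne_zero hres

theorem exists_eq_span_singleton_of_finrank_eq_one {S : Submodule K E} (hS : finrank K S = 1) :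
    ∃ v ≠ 0, S = K ∙ v := by
  have hS' : S ≠ ⊥ := by rintro rfl; simp at hS
  obtain ⟨v, hvS, hv⟩ := exists_mem_ne_zero_of_ne_bot hS'
  exact ⟨v, hv, eq_span_singleton_of_mem_of_finrank_eq_one hS hvS hv⟩

end Submodule

namespace Quaternion

variable {R : Type*} [CommRing R]

theorem eq_zero_of_forall_re_mul_eq_zero {x : ℍ[R]} (h : ∀ a : ℍ[R], (a * x).re = 0) : x = 0 := by
  have hre := h 1
  have hI := h ⟨0, -1, 0, 0⟩
  have hJ := h ⟨0, 0, -1, 0⟩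
  have hK := h ⟨0, 0, 0, -1⟩
  rw [one_mul] at hre
  erw [Quaternion.re_mul] at hI hJ hK
  ext <;> simp_all

theorem exists_mem_re_ne_zero_of_ne_bot {J : Ideal ℍ[R]} (hJ : J ≠ ⊥) : ∃ x ∈ J, x.re ≠ 0 := by
  by_contra! h
  refine hJ (J.eq_bot_iff.mpr fun x hx ↦ eq_zero_of_forall_re_mul_eq_zero fun a ↦ ?_)
  exact h _ (J.mul_mem_left a hx)

end Quaternion

open Quaternion in
theorem traceZero_in_ideal_unique_general (p : ℕ) [Fact p.Prime]
    (J : Ideal ℍ[ZMod p])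
    (hdim : Module.finrank (ZMod p) (Submodule.restrictScalars (ZMod p) J) = 2) :
    ∃ v : ℍ[ZMod p], v ∈ J ∧ v ≠ 0 ∧ v.re = 0 ∧
      ∀ w ∈ J, w.re = 0 → ∃ c : ZMod p, w = c • v := by
  have hJ : J ≠ ⊥ := by
    rintro rfl
    rw [Submodule.restrictScalars_bot, finrank_bot] at hdim
    omega
  set V := J.restrictScalars (ZMod p)
  have : FiniteDimensional (ZMod p) V := Module.finite_of_finrank_eq_succ hdim
  set re : Dual (ZMod p) ℍ[ZMod p] := QuaternionAlgebra.reₗ _ _ _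
  have hline : finrank (ZMod p) ↥(V ⊓ LinearMap.ker re) = 1 := by
    have := V.finrank_inf_ker_add_one re (exists_mem_re_ne_zero_of_ne_bot hJ)
    omega
  obtain ⟨v, hv0, hspan⟩ := Submodule.exists_eq_span_singleton_of_finrank_eq_one hline
  have hvmem : v ∈ V ⊓ LinearMap.ker re := hspan ▸ Submodule.mem_span_singleton_self v
  refine ⟨v, hvmem.1, hv0, hvmem.2, fun w hwJ hwre ↦ ?_⟩
  have hw : w ∈ V ⊓ LinearMap.ker re := ⟨hwJ, hwre⟩
  obtain ⟨c, hc⟩ := Submodule.mem_span_singleton.mp (hspan ▸ hw)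
  exact ⟨c, hc.symm⟩

open Quaternion in
/-- In a two-dimensional left ideal `Π` of the quaternion algebra `(-1,-1)` over
`𝔽_p`, there is a unique nonzero trace-zero element up to scaling. -/
theorem traceZero_in_ideal_unique (p : ℕ) [Fact p.Prime] (hp : Odd p)
    (J : Ideal ℍ[ZMod p])
    (hdim : Module.finrank (ZMod p) (Submodule.restrictScalars (ZMod p) J) = 2) :
    ∃ v : ℍ[ZMod p], v ∈ J ∧ v ≠ 0 ∧ v.re = 0 ∧
      ∀ w ∈ J, w.re = 0 → ∃ c : ZMod p, w = c • v :=
  traceZero_in_ideal_unique_general p J hdim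
end

section
/- Let p be an odd prime. The map sending a point (x:y:z) of the projective conic C_p: x² + y² + z² = 0 in P²(F_p) to the left ideal H̄·(xi + yj + zk) is a bijection between points of C_p and the two-dimensional left ideals of the quaternion algebra H̄ over F_p. -/
/-!
For a pure quaternion `q = xi + yj + zk` one has `q² = -(x² + y² + z²)`, so the points of the
conic are the nonzero pure quaternions with `q² = 0`. For such `q`, right multiplication by `q`
maps `ℍ` into its own kernel, so `dim ℍq ≤ 2`; and `dim ℍq ≥ 2`, because `ℍq` contains both `q`
and, the trace form being nondegenerate, some `aq` with nonzero real part. Consequently the pure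
part of `ℍq` is the line `Kq`, which recovers the point from the ideal. Conversely, a
two-dimensional left ideal `J` meets the three-dimensional space of pure quaternions; a nonzero
pure `q ∈ J` cannot be invertible (else `J = ℍ`), so `normSq q = 0`, and `ℍq ⊆ J` have equal
dimension.
-/

open Quaternion Module

namespace Quaternion

section CommRing

variable {R : Type*} [CommRing R]

def pureₗ : (Fin 3 → R) →ₗ[R] ℍ[R] where
  toFun v := ⟨0, v 0, v 1, v 2⟩
  map_add' _ _ := Quaternion.ext _ _ (add_zero 0).symm rfl rfl rfl
  map_smul' c _ := Quaternion.ext _ _ (smul_zero c).symm rfl rfl rfl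

@[simp] theorem re_pureₗ (v : Fin 3 → R) : (pureₗ v).re = 0 := rfl

@[simp] theorem imI_pureₗ (v : Fin 3 → R) : (pureₗ v).imI = v 0 := rfl

@[simp] theorem imJ_pureₗ (v : Fin 3 → R) : (pureₗ v).imJ = v 1 := rfl

@[simp] theorem imK_pureₗ (v : Fin 3 → R) : (pureₗ v).imK = v 2 := rfl

theorem normSq_pureₗ (v : Fin 3 → R) : normSq (pureₗ v) = v 0 ^ 2 + v 1 ^ 2 + v 2 ^ 2 := by
  simp [normSq_def']

theorem pureₗ_injective : Function.Injective (pureₗ : (Fin 3 → R) →ₗ[R] ℍ[R]) := by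
  intro v w h
  funext i
  fin_cases i
  · simpa using congrArg QuaternionAlgebra.imI h
  · simpa using congrArg QuaternionAlgebra.imJ h
  · simpa using congrArg QuaternionAlgebra.imK h

theorem exists_pureₗ_eq {q : ℍ[R]} (hre : q.re = 0) : ∃ v, pureₗ v = q :=
  ⟨![q.imI, q.imJ, q.imK], by ext <;> simp [hre]⟩

theorem mul_self_eq_zero_of_re_eq_zero_of_normSq_eq_zero {q : ℍ[R]} (hre : q.re = 0)
    (hN : normSq q = 0) : q * q = 0 := by
  have : q * star q = 0 := by rw [self_mul_star, hN, coe_zero]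
  rwa [star_eq_two_re_sub, hre, mul_zero, coe_zero, zero_sub, mul_neg, neg_eq_zero] at this

theorem exists_re_mul_ne_zero {q : ℍ[R]} (hq : q ≠ 0) : ∃ a : ℍ[R], (a * q).re ≠ 0 := by
  by_contra! h
  refine hq (Quaternion.ext _ _ ?_ ?_ ?_ ?_)
  · simpa using h 1
  · simpa [re_mul] using h (pureₗ ![-1, 0, 0])
  · simpa [re_mul] using h (pureₗ ![0, -1, 0])
  · simpa [re_mul] using h (pureₗ ![0, 0, -1])

theorem restrictScalars_span_singleton_eq_range (q : ℍ[R]) :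
    (Ideal.span {q}).restrictScalars R = LinearMap.range (LinearMap.mulRight R q) := by
  ext x
  simp [Ideal.mem_span_singleton']

-- `ℍ[R]` is a `def`, so `QuaternionAlgebra.reₗ` has to be transported to it by hand.
def reₗ : ℍ[R] →ₗ[R] R := QuaternionAlgebra.reₗ _ _ _

@[simp] theorem reₗ_apply (q : ℍ[R]) : reₗ q = q.re := rfl

end CommRing

section Field

variable {K : Type*} [Field K] {q : ℍ[K]}

theorem finrank_ker_reₗ : finrank K (LinearMap.ker (reₗ : ℍ[K] →ₗ[K] K)) = 3 := by
  have hsurj : LinearMap.range (reₗ : ℍ[K] →ₗ[K] K) = ⊤ :=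
    LinearMap.range_eq_top.mpr fun r => ⟨(r : ℍ[K]), rfl⟩
  have := LinearMap.finrank_range_add_finrank_ker (reₗ : ℍ[K] →ₗ[K] K)
  rw [hsurj, finrank_top, finrank_self, finrank_eq_four] at this
  omega

theorem restrictScalars_span_singleton_inf_ker_reₗ_lt (hq : q ≠ 0) :
    (Ideal.span {q}).restrictScalars K ⊓ LinearMap.ker reₗ <
      (Ideal.span {q}).restrictScalars K := by
  obtain ⟨a, ha⟩ := exists_re_mul_ne_zero hq
  exact inf_lt_left.mpr fun h => ha (h (Ideal.mul_mem_left _ a (Ideal.mem_span_singleton_self q)))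

theorem span_singleton_le_restrictScalars_span_singleton_inf_ker_reₗ (hre : q.re = 0) :
    K ∙ q ≤ (Ideal.span {q}).restrictScalars K ⊓ LinearMap.ker reₗ :=
  (Submodule.span_singleton_le_iff_mem _ _).mpr ⟨Ideal.mem_span_singleton_self q, hre⟩

theorem finrank_restrictScalars_span_singleton_eq_two (hq : q ≠ 0) (hre : q.re = 0)
    (hN : normSq q = 0) : finrank K ((Ideal.span {q}).restrictScalars K) = 2 := by
  have hlower : 1 < finrank K ((Ideal.span {q}).restrictScalars K) := calc
    1 = finrank K (K ∙ q) := (finrank_span_singleton hq).symm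
    _ ≤ _ := Submodule.finrank_mono
      (span_singleton_le_restrictScalars_span_singleton_inf_ker_reₗ hre)
    _ < _ := Submodule.finrank_lt_finrank_of_lt (restrictScalars_span_singleton_inf_ker_reₗ_lt hq)
  have hrange_le_ker :
      LinearMap.range (LinearMap.mulRight K q) ≤ LinearMap.ker (LinearMap.mulRight K q) := by
    rintro _ ⟨a, rfl⟩
    simp [mul_assoc, mul_self_eq_zero_of_re_eq_zero_of_normSq_eq_zero hre hN]
  have hupper := Submodule.finrank_mono hrange_le_ker
  have hsum := (LinearMap.mulRight K q).finrank_range_add_finrank_ker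
  rw [finrank_eq_four] at hsum
  rw [restrictScalars_span_singleton_eq_range] at hlower ⊢
  omega

theorem restrictScalars_span_singleton_inf_ker_reₗ (hq : q ≠ 0) (hre : q.re = 0)
    (hN : normSq q = 0) :
    (Ideal.span {q}).restrictScalars K ⊓ LinearMap.ker reₗ = K ∙ q := by
  refine (Submodule.eq_of_le_of_finrank_le
    (span_singleton_le_restrictScalars_span_singleton_inf_ker_reₗ hre) ?_).symm
  have := Submodule.finrank_lt_finrank_of_lt (restrictScalars_span_singleton_inf_ker_reₗ_lt hq)
  rw [finrank_restrictScalars_span_singleton_eq_two hq hre hN] at this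
  rw [finrank_span_singleton hq]
  omega

theorem exists_span_singleton_eq_of_finrank_eq_two {J : Ideal ℍ[K]}
    (hJ : finrank K (J.restrictScalars K) = 2) :
    ∃ q : ℍ[K], q ≠ 0 ∧ q.re = 0 ∧ normSq q = 0 ∧ Ideal.span {q} = J := by
  obtain ⟨q, ⟨hqJ, hre⟩, hq⟩ : ∃ q ∈ J.restrictScalars K ⊓ LinearMap.ker reₗ, q ≠ 0 := by
    rw [← Submodule.ne_bot_iff, ne_eq, ← Submodule.finrank_eq_zero]
    have hsum := Submodule.finrank_sup_add_finrank_inf_eq (J.restrictScalars K) (LinearMap.ker reₗ)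
    have hle := Submodule.finrank_le (J.restrictScalars K ⊔ LinearMap.ker reₗ)
    rw [finrank_eq_four] at hle
    rw [hJ, finrank_ker_reₗ] at hsum
    omega
  have hN : normSq q = 0 := by
    by_contra hN
    have hunit : ((normSq q)⁻¹ • star q) * q = 1 := by
      rw [smul_mul_assoc, star_mul_self, smul_coe, inv_mul_cancel₀ hN, coe_one]
    have htop : J = ⊤ := (Ideal.eq_top_iff_one J).mpr (hunit ▸ J.mul_mem_left _ hqJ)
    rw [htop, Submodule.restrictScalars_top, finrank_top, finrank_eq_four] at hJ
    omega
  refine ⟨q, hq, hre, hN, Submodule.restrictScalars_injective K _ _ ?_⟩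
  refine Submodule.eq_of_le_of_finrank_eq (fun x hx => ?_) ?_
  · exact (Ideal.span_singleton_le_iff_mem J).mpr hqJ hx
  · rw [finrank_restrictScalars_span_singleton_eq_two hq hre hN, hJ]

end Field

end Quaternion

open Quaternion in
theorem conic_bijects_with_ideals_general (p : ℕ) [Fact p.Prime] :
    (∀ v : Fin 3 → ZMod p, v ≠ 0 → v 0 ^ 2 + v 1 ^ 2 + v 2 ^ 2 = 0 →
      Module.finrank (ZMod p) (Submodule.restrictScalars (ZMod p)
        (Ideal.span {(⟨0, v 0, v 1, v 2⟩ : ℍ[ZMod p])})) = 2) ∧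
    (∀ v w : Fin 3 → ZMod p, v ≠ 0 → v 0 ^ 2 + v 1 ^ 2 + v 2 ^ 2 = 0 →
      w ≠ 0 → w 0 ^ 2 + w 1 ^ 2 + w 2 ^ 2 = 0 →
      ((Ideal.span {(⟨0, v 0, v 1, v 2⟩ : ℍ[ZMod p])} : Ideal ℍ[ZMod p])
          = Ideal.span {(⟨0, w 0, w 1, w 2⟩ : ℍ[ZMod p])}
        ↔ ∃ c : (ZMod p)ˣ, w = (c : ZMod p) • v)) ∧
    (∀ J : Ideal ℍ[ZMod p],
      Module.finrank (ZMod p) (Submodule.restrictScalars (ZMod p) J) = 2 →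
      ∃ v : Fin 3 → ZMod p, v ≠ 0 ∧ v 0 ^ 2 + v 1 ^ 2 + v 2 ^ 2 = 0 ∧
        Ideal.span {(⟨0, v 0, v 1, v 2⟩ : ℍ[ZMod p])} = J) := by
  have hpure {v : Fin 3 → ZMod p} (hv : v ≠ 0) : pureₗ v ≠ 0 :=
    (map_ne_zero_iff _ pureₗ_injective).mpr hv
  refine ⟨fun v hv hc => ?_, fun v w hv hcv hw _ => ⟨fun h => ?_, ?_⟩, fun J hJ => ?_⟩
  · exact finrank_restrictScalars_span_singleton_eq_two (hpure hv) (re_pureₗ v)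
      ((normSq_pureₗ v).trans hc)
  · have hw_mem : pureₗ w ∈ ZMod p ∙ pureₗ v := by
      rw [← restrictScalars_span_singleton_inf_ker_reₗ (hpure hv) (re_pureₗ v)
        ((normSq_pureₗ v).trans hcv)]
      exact ⟨h ▸ Ideal.mem_span_singleton_self _, re_pureₗ w⟩
    obtain ⟨c, hc⟩ := Submodule.mem_span_singleton.mp hw_mem
    have hc0 : c ≠ 0 := by
      rintro rfl
      exact hpure hw (by rw [← hc, zero_smul])
    exact ⟨Units.mk0 c hc0, pureₗ_injective (by rw [map_smul, Units.val_mk0, hc])⟩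
  · rintro ⟨c, rfl⟩
    change Ideal.span {pureₗ v} = Ideal.span {pureₗ ((c : ZMod p) • v)}
    rw [map_smul, ← Units.smul_def]
    exact (Submodule.span_singleton_group_smul_eq ℍ[ZMod p] c (pureₗ v)).symm
  · obtain ⟨q, hq, hre, hN, rfl⟩ := exists_span_singleton_eq_of_finrank_eq_two hJ
    obtain ⟨v, rfl⟩ := exists_pureₗ_eq hre
    exact ⟨v, fun hv => hq (by rw [hv, map_zero]), (normSq_pureₗ v).symm.trans hN, rfl⟩

open Quaternion in
/-- The map `(x:y:z) ↦ H̄·(xi + yj + zk)` is a bijection between the points of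
the projective conic `x² + y² + z² = 0` and the two-dimensional left ideals of
the quaternion algebra `(-1,-1)` over `𝔽_p`: it sends every conic point to a
two-dimensional left ideal, two points give the same ideal iff they are
proportional, and every two-dimensional left ideal arises this way. -/
theorem conic_bijects_with_ideals (p : ℕ) [Fact p.Prime] (hp : Odd p) :
    (∀ v : Fin 3 → ZMod p, v ≠ 0 → v 0 ^ 2 + v 1 ^ 2 + v 2 ^ 2 = 0 →
      Module.finrank (ZMod p) (Submodule.restrictScalars (ZMod p)
        (Ideal.span {(⟨0, v 0, v 1, v 2⟩ : ℍ[ZMod p])})) = 2) ∧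
    (∀ v w : Fin 3 → ZMod p, v ≠ 0 → v 0 ^ 2 + v 1 ^ 2 + v 2 ^ 2 = 0 →
      w ≠ 0 → w 0 ^ 2 + w 1 ^ 2 + w 2 ^ 2 = 0 →
      ((Ideal.span {(⟨0, v 0, v 1, v 2⟩ : ℍ[ZMod p])} : Ideal ℍ[ZMod p])
          = Ideal.span {(⟨0, w 0, w 1, w 2⟩ : ℍ[ZMod p])}
        ↔ ∃ c : (ZMod p)ˣ, w = (c : ZMod p) • v)) ∧
    (∀ J : Ideal ℍ[ZMod p],
      Module.finrank (ZMod p) (Submodule.restrictScalars (ZMod p) J) = 2 →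
      ∃ v : Fin 3 → ZMod p, v ≠ 0 ∧ v 0 ^ 2 + v 1 ^ 2 + v 2 ^ 2 = 0 ∧
        Ideal.span {(⟨0, v 0, v 1, v 2⟩ : ℍ[ZMod p])} = J) :=
  conic_bijects_with_ideals_general p
end

section
/- Let p be an odd prime and Q = a + bi + cj + dk an invertible element of the quaternion algebra H̄ over F_p with norm q̄ = a² + b² + c² + d² ≠ 0. The conjugation map φ_Q: v ↦ Q⁻¹ v Q restricted to the trace-zero quaternions is an element of SO₃(F_p) (for the form x² + y² + z²), and its characteristic polynomial is (x − 1)(x² + 2(1 − 2a²/q̄)x + 1). -/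
open Polynomial in
lemma charpoly_fin_three' {F : Type*} [CommRing F] (A : Matrix (Fin 3) (Fin 3) F) :
    A.charpoly = X ^ 3 - C (A 0 0 + A 1 1 + A 2 2) * X ^ 2
      + C (A 0 0 * A 1 1 - A 0 1 * A 1 0 + A 0 0 * A 2 2 - A 0 2 * A 2 0
            + A 1 1 * A 2 2 - A 1 2 * A 2 1) * X
      - C (A.det) := by
  rw [Matrix.charpoly, Matrix.det_fin_three, Matrix.det_fin_three]
  simp only [Matrix.charmatrix_apply_eq, Matrix.charmatrix_apply_ne _ _ _ (by decide : (0 : Fin 3) ≠ 1),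
    Matrix.charmatrix_apply_ne _ _ _ (by decide : (0 : Fin 3) ≠ 2),
    Matrix.charmatrix_apply_ne _ _ _ (by decide : (1 : Fin 3) ≠ 0),
    Matrix.charmatrix_apply_ne _ _ _ (by decide : (1 : Fin 3) ≠ 2),
    Matrix.charmatrix_apply_ne _ _ _ (by decide : (2 : Fin 3) ≠ 0),
    Matrix.charmatrix_apply_ne _ _ _ (by decide : (2 : Fin 3) ≠ 1),
    map_add, map_sub, map_mul]
  ring

open Polynomial Quaternion in
/-- Let `Q = a + bi + cj + dk` be a quaternion over `𝔽_p` of nonzero norm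
`q̄ = a² + b² + c² + d²`, and let `M` be the 3×3 matrix representing the
conjugation map `v ↦ Q⁻¹ v Q` on trace-zero quaternions, in the basis `i, j, k`
(i.e. `Q * (M v) = v * Q` for all trace-zero `v`).  Then `M` lies in
`SO₃(𝔽_p)` for the form `x² + y² + z²`, and its characteristic polynomial is
`(x - 1)(x² + 2(1 - 2a²/q̄)x + 1)`. -/
theorem conjugation_SO3_charpoly (p : ℕ) [Fact p.Prime] (hp : Odd p)
    (a b c d : ZMod p) (hq : a ^ 2 + b ^ 2 + c ^ 2 + d ^ 2 ≠ 0)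
    (M : Matrix (Fin 3) (Fin 3) (ZMod p))
    (hM : ∀ x y z : ZMod p,
      (⟨a, b, c, d⟩ : ℍ[ZMod p]) *
          ⟨0, M.mulVec ![x, y, z] 0, M.mulVec ![x, y, z] 1, M.mulVec ![x, y, z] 2⟩
        = (⟨0, x, y, z⟩ : ℍ[ZMod p]) * ⟨a, b, c, d⟩) :
    M.det = 1 ∧
    (∀ w : Fin 3 → ZMod p,
      (M.mulVec w 0) ^ 2 + (M.mulVec w 1) ^ 2 + (M.mulVec w 2) ^ 2
        = (w 0) ^ 2 + (w 1) ^ 2 + (w 2) ^ 2) ∧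
    M.charpoly =
      (X - 1) * (X ^ 2
        + C (2 * (1 - 2 * a ^ 2 / (a ^ 2 + b ^ 2 + c ^ 2 + d ^ 2))) * X + 1) := by
  set q : ZMod p := a ^ 2 + b ^ 2 + c ^ 2 + d ^ 2 with hqdef
  have h0 := hM 1 0 0
  have h1 := hM 0 1 0
  have h2 := hM 0 0 1
  simp only [QuaternionAlgebra.mk_mul_mk, QuaternionAlgebra.mk.injEq,
    Matrix.mulVec, dotProduct, Fin.sum_univ_three,
    Matrix.cons_val_zero, Matrix.cons_val_one, Matrix.head_cons,
    Matrix.cons_val_two, Matrix.tail_cons] at h0 h1 h2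
  obtain ⟨e00, e01, e02, e03⟩ := h0
  obtain ⟨e10, e11, e12, e13⟩ := h1
  obtain ⟨e20, e21, e22, e23⟩ := h2
  have h00 : M 0 0 = (a ^ 2 + b ^ 2 - c ^ 2 - d ^ 2) / q := by
    rw [eq_div_iff hq]; linear_combination a * e01 - b * e00 - c * e03 + d * e02
  have h10 : M 1 0 = (2 * (b * c - a * d)) / q := by
    rw [eq_div_iff hq]; linear_combination a * e02 + b * e03 - c * e00 - d * e01
  have h20 : M 2 0 = (2 * (b * d + a * c)) / q := by
    rw [eq_div_iff hq]; linear_combination a * e03 - b * e02 + c * e01 - d * e00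
  have h01 : M 0 1 = (2 * (b * c + a * d)) / q := by
    rw [eq_div_iff hq]; linear_combination a * e11 - b * e10 - c * e13 + d * e12
  have h11 : M 1 1 = (a ^ 2 - b ^ 2 + c ^ 2 - d ^ 2) / q := by
    rw [eq_div_iff hq]; linear_combination a * e12 + b * e13 - c * e10 - d * e11
  have h21 : M 2 1 = (2 * (c * d - a * b)) / q := by
    rw [eq_div_iff hq]; linear_combination a * e13 - b * e12 + c * e11 - d * e10
  have h02 : M 0 2 = (2 * (b * d - a * c)) / q := by
    rw [eq_div_iff hq]; linear_combination a * e21 - b * e20 - c * e23 + d * e22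
  have h12 : M 1 2 = (2 * (c * d + a * b)) / q := by
    rw [eq_div_iff hq]; linear_combination a * e22 + b * e23 - c * e20 - d * e21
  have h22 : M 2 2 = (a ^ 2 - b ^ 2 - c ^ 2 + d ^ 2) / q := by
    rw [eq_div_iff hq]; linear_combination a * e23 - b * e22 + c * e21 - d * e20
  have hdet : M.det = 1 := by
    rw [Matrix.det_fin_three, h00, h01, h02, h10, h11, h12, h20, h21, h22]
    field_simp
    ring
  refine ⟨hdet, ?_, ?_⟩
  · intro w
    simp only [Matrix.mulVec, dotProduct, Fin.sum_univ_three]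
    rw [h00, h01, h02, h10, h11, h12, h20, h21, h22]
    field_simp
    ring
  · rw [charpoly_fin_three', hdet, h00, h01, h02, h10, h11, h12, h20, h21, h22]
    have htr : (a ^ 2 + b ^ 2 - c ^ 2 - d ^ 2) / q + (a ^ 2 - b ^ 2 + c ^ 2 - d ^ 2) / q
        + (a ^ 2 - b ^ 2 - c ^ 2 + d ^ 2) / q = 4 * a ^ 2 / q - 1 := by
      field_simp
      ring
    have hs2 : (a ^ 2 + b ^ 2 - c ^ 2 - d ^ 2) / q * ((a ^ 2 - b ^ 2 + c ^ 2 - d ^ 2) / q)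
        - 2 * (b * c + a * d) / q * (2 * (b * c - a * d) / q)
        + (a ^ 2 + b ^ 2 - c ^ 2 - d ^ 2) / q * ((a ^ 2 - b ^ 2 - c ^ 2 + d ^ 2) / q)
        - 2 * (b * d - a * c) / q * (2 * (b * d + a * c) / q)
        + (a ^ 2 - b ^ 2 + c ^ 2 - d ^ 2) / q * ((a ^ 2 - b ^ 2 - c ^ 2 + d ^ 2) / q)
        - 2 * (c * d + a * b) / q * (2 * (c * d - a * b) / q) = 4 * a ^ 2 / q - 1 := by
      field_simp
      ring
    rw [htr, hs2]
    have he : 2 * (1 - 2 * a ^ 2 / q) = 1 - (4 * a ^ 2 / q - 1) := by ring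
    rw [he]
    simp only [map_sub, map_one]
    ring
end
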